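/- Let S be a commutative semiring. For linear maps f_k, g_k : S^{m_k} → S^{n_k} (k = 1,2), if for all states a_k : S → S^{m_k} and effects b_k : S^{n_k} → S the scalars (b₁∘f₁∘a₁)·(b₂∘f₂∘a₂) and (b₁∘g₁∘a₁)·(b₂∘g₂∘a₂) agree, then f₁ ⊗ f₂ = g₁ ⊗ g₂ as maps S^{m₁m₂} → S^{n₁n₂}. -/

import Mathlib

open TensorProduct

theorem product_tomography (S : Type*) [CommSemiring S] (m₁ m₂ n₁ n₂ : ℕ)
    (f₁ g₁ : (Fin m₁ → S) →ₗ[S] (Fin n₁ → S))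
    (f₂ g₂ : (Fin m₂ → S) →ₗ[S] (Fin n₂ → S))
    (h : ∀ (a₁ : S →ₗ[S] (Fin m₁ → S)) (a₂ : S →ₗ[S] (Fin m₂ → S))
        (b₁ : (Fin n₁ → S) →ₗ[S] S) (b₂ : (Fin n₂ → S) →ₗ[S] S),
        (b₁ (f₁ (a₁ 1))) * (b₂ (f₂ (a₂ 1))) = (b₁ (g₁ (a₁ 1))) * (b₂ (g₂ (a₂ 1)))) :
    TensorProduct.map f₁ f₂ = TensorProduct.map g₁ g₂ := by
  apply TensorProduct.ext'
  intro x y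
  simp only [TensorProduct.map_tmul]
  apply ((Pi.basisFun S (Fin n₁)).tensorProduct (Pi.basisFun S (Fin n₂))).repr.injective
  ext ⟨i, j⟩
  simp only [Module.Basis.tensorProduct_repr_tmul_apply, Pi.basisFun_repr]
  simpa [smul_eq_mul, mul_comm] using h (LinearMap.toSpanSingleton S _ x) (LinearMap.toSpanSingleton S _ y)
    (LinearMap.proj i) (LinearMap.proj j)
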